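/- Let c(ε) denote the number of connected components of the Vietoris–Rips 1-skeleton of G at scale ε. Then c(ε) = m(ε) + 1, where m(ε) is the number of finite 0-dimensional persistence points of G with death time strictly greater than ε. Consequently, W_p(D_0(G), D_0(G_ε)) ≤ (c(ε) − 1)^{1/p}(1 − ε). -/

import Mathlib

open scoped Classical
noncomputable section

variable {V : Type*} [Fintype V]

/-- Vietoris–Rips 1-skeleton of a weighted complete graph at scale `α`. -/
def vrGraph (w : V → V → ℝ) (α : ℝ) : SimpleGraph V where
  Adj i j := i ≠ j ∧ max (w i j) (w j i) ≤ α
  symm := by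
    constructor
    intro i j h
    exact ⟨h.1.symm, by rw [max_comm]; exact h.2⟩
  loopless := ⟨fun i h => h.1 rfl⟩

/-- Number of connected components of the Rips 1-skeleton at scale `α`. -/
def compCount (w : V → V → ℝ) (α : ℝ) : ℕ :=
  Nat.card (vrGraph w α).ConnectedComponent

/-- Left limit of the component counting function at `d`. -/
def compCountLeft (w : V → V → ℝ) (d : ℝ) : ℕ :=
  sInf (compCount w '' Set.Iio d)

/-- Multiplicity of `d` as a finite death time in the `H₀` persistence diagram. -/
def deathMult (w : V → V → ℝ) (d : ℝ) : ℕ :=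
  compCountLeft w d - compCount w d

/-- The finitely many candidate filtration values (the edge weights). -/
def weightVals (w : V → V → ℝ) : Finset ℝ :=
  Finset.image (fun p : V × V => max (w p.1 p.2) (w p.2 p.1)) Finset.univ

/-- The multiset of finite death times of the 0-dimensional persistence diagram
of the Vietoris–Rips filtration of the weighted complete graph `w`. -/
def finiteDeaths (w : V → V → ℝ) : Multiset ℝ :=
  (weightVals w).val.bind fun d => Multiset.replicate (deathMult w d) d

/-- The 0-dimensional persistence diagram (finite points; all births are `0`). -/
def D0 (w : V → V → ℝ) : Multiset (ℝ × ℝ) :=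
  (finiteDeaths w).map fun d => (0, d)

/-- Threshold modification: weights above `ε` are raised to `1`. -/
def thresh (w : V → V → ℝ) (ε : ℝ) : V → V → ℝ :=
  fun i j => if w i j ≤ ε then w i j else 1

/-- The number of finite 0-dimensional persistence points with death time `> ε`. -/
def mEps (w : V → V → ℝ) (ε : ℝ) : ℕ :=
  ((finiteDeaths w).filter (fun d => ε < d)).card

/-- A matching between two persistence diagrams: a multiset of pairs whose
projections recover each diagram augmented with some diagonal points. -/
def IsMatching (D1 D2 : Multiset (ℝ × ℝ)) (M : Multiset ((ℝ × ℝ) × (ℝ × ℝ))) : Prop :=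
  ∃ S1 S2 : Multiset (ℝ × ℝ), (∀ u ∈ S1, u.1 = u.2) ∧ (∀ u ∈ S2, u.1 = u.2) ∧
    M.map Prod.fst = D1 + S1 ∧ M.map Prod.snd = D2 + S2

/-- The `p`-th power cost of a matching, with the `ℓ_p` ground metric. -/
def matchCost (p : ℝ) (M : Multiset ((ℝ × ℝ) × (ℝ × ℝ))) : ℝ :=
  (M.map fun q => |q.1.1 - q.2.1| ^ p + |q.1.2 - q.2.2| ^ p).sum

/-- The `p`-Wasserstein distance between persistence diagrams. -/
def diagramDist (p : ℝ) (D1 D2 : Multiset (ℝ × ℝ)) : ℝ :=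
  sInf {c | ∃ M, IsMatching D1 D2 M ∧ c = matchCost p M ^ (1 / p)}

/-!
Between two consecutive edge weights the Rips graph does not change, and at the largest weight
it is complete, hence connected. So `c(β)` telescopes: it is `1` plus the drops `c(d⁻) - c(d)`
at the weights `d > β`, which are exactly the multiplicities of the deaths `d > β`.

Thresholding at `ε` leaves the Rips filtration unchanged up to scale `ε` and merges everything
else at scale `1`. Hence `D₀(G_ε)` keeps the deaths `≤ ε` of `D₀(G)` and moves each of the
`m(ε)` deaths in `(ε, 1]` to `1`; matching every point with its image costs at most
`m(ε) (1 - ε)^p`.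
-/

section Filtration

variable (w : V → V → ℝ)

lemma max_mem_weightVals (i j : V) : max (w i j) (w j i) ∈ weightVals w :=
  Finset.mem_image.2 ⟨(i, j), Finset.mem_univ _, rfl⟩

lemma compCount_antitone : Antitone (compCount w) := fun _ _ h =>
  SimpleGraph.ConnectedComponent.card_le_card_of_le fun _ _ hij => ⟨hij.1, hij.2.trans h⟩

variable {w}

lemma compCount_eq_of_forall_weightVals {α β : ℝ}
    (h : ∀ m ∈ weightVals w, m ≤ α ↔ m ≤ β) : compCount w α = compCount w β := by
  have : vrGraph w α = vrGraph w β := by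
    ext i j
    exact and_congr_right fun _ => h _ (max_mem_weightVals w i j)
  rw [compCount, this, compCount]

omit [Fintype V] in
lemma compCount_eq_one [Nonempty V] {α : ℝ} (h : ∀ i j, max (w i j) (w j i) ≤ α) :
    compCount w α = 1 := by
  have htop : vrGraph w α = ⊤ := by
    ext i j
    exact ⟨fun hij => hij.1, fun hij => ⟨hij, h i j⟩⟩
  have hconn : (vrGraph w α).Connected := htop ▸ SimpleGraph.connected_top
  rw [compCount, Nat.card_eq_one_iff_unique]
  exact ⟨hconn.preconnected.subsingleton_connectedComponent,
    hconn.nonempty.map (vrGraph w α).connectedComponentMk⟩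

lemma compCountLeft_eq {α d : ℝ} (hαd : α < d)
    (h : ∀ m ∈ weightVals w, m < d → m ≤ α) : compCountLeft w d = compCount w α := by
  refine le_antisymm (csInf_le (OrderBot.bddBelow _) ⟨α, hαd, rfl⟩)
    (le_csInf ⟨_, α, hαd, rfl⟩ ?_)
  rintro _ ⟨β, hβd, rfl⟩
  rcases le_or_gt β α with hβα | hαβ
  · exact compCount_antitone w hβα
  · exact (compCount_eq_of_forall_weightVals fun m hm =>
      ⟨fun hmα => hmα.trans hαβ.le, fun hmβ => h m hm (hmβ.trans_lt hβd)⟩).le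

lemma compCount_eq_deathMult_add {β d : ℝ} (hβd : β < d)
    (h : ∀ m ∈ weightVals w, m < d → m ≤ β) :
    compCount w β = deathMult w d + compCount w d := by
  have := compCount_antitone w hβd.le
  rw [deathMult, compCountLeft_eq hβd h]
  omega

lemma compCount_eq_sum_deathMult_add_one [Nonempty V] (β : ℝ) :
    compCount w β = ∑ d ∈ (weightVals w).filter (β < ·), deathMult w d + 1 := by
  induction hn : ((weightVals w).filter (β < ·)).card using Nat.strong_induction_on
      generalizing β with
  | _ n ih =>
    set S := (weightVals w).filter (β < ·)
    rcases S.eq_empty_or_nonempty with hS | hS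
    · rw [hS, Finset.sum_empty, compCount_eq_one fun i j => ?_]
      by_contra hlt
      exact Finset.eq_empty_iff_forall_notMem.1 hS _
        (Finset.mem_filter.2 ⟨max_mem_weightVals w i j, not_le.1 hlt⟩)
    obtain ⟨hd₀w, hβd₀⟩ := Finset.mem_filter.1 (S.min'_mem hS)
    set d₀ := S.min' hS
    have hS_eq : S = insert d₀ ((weightVals w).filter (d₀ < ·)) := by
      ext m
      simp only [S, Finset.mem_insert, Finset.mem_filter]
      constructor
      · rintro hm
        rcases (S.min'_le m (Finset.mem_filter.2 hm)).eq_or_lt with h | h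
        exacts [Or.inl h.symm, Or.inr ⟨hm.1, h⟩]
      · rintro (rfl | hm)
        exacts [⟨hd₀w, hβd₀⟩, ⟨hm.1, hβd₀.trans hm.2⟩]
    have hcard : ((weightVals w).filter (d₀ < ·)).card < n := by
      rw [← hn, hS_eq, Finset.card_insert_of_notMem (by simp)]
      omega
    have hgap : ∀ m ∈ weightVals w, m < d₀ → m ≤ β := fun m hm hmd₀ =>
      not_lt.1 fun hβm => (S.min'_le m (Finset.mem_filter.2 ⟨hm, hβm⟩)).not_gt hmd₀
    rw [compCount_eq_deathMult_add hβd₀ hgap, ih _ hcard d₀ rfl, hS_eq,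
      Finset.sum_insert (by simp)]
    ring

end Filtration

section Deaths

variable {w : V → V → ℝ}

lemma mem_weightVals_of_mem_finiteDeaths {d : ℝ} (hd : d ∈ finiteDeaths w) :
    d ∈ weightVals w := by
  obtain ⟨m, hm, hdm⟩ := Multiset.mem_bind.1 hd
  exact Multiset.eq_of_mem_replicate hdm ▸ hm

variable (w)

lemma finiteDeaths_filter (q : ℝ → Prop) :
    (finiteDeaths w).filter q =
      ((weightVals w).filter q).val.bind fun d => Multiset.replicate (deathMult w d) d := by
  rw [finiteDeaths, Multiset.filter_bind, Finset.filter_val, Multiset.bind_filter]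
  refine Multiset.bind_congr fun d _ => ?_
  split_ifs with hd
  · exact Multiset.filter_eq_self.2 fun b hb => Multiset.eq_of_mem_replicate hb ▸ hd
  · exact Multiset.filter_eq_nil.2 fun b hb => Multiset.eq_of_mem_replicate hb ▸ hd

lemma mEps_eq_sum_deathMult (ε : ℝ) :
    mEps w ε = ∑ d ∈ (weightVals w).filter (ε < ·), deathMult w d := by
  rw [mEps, finiteDeaths_filter, Multiset.card_bind, Finset.sum_eq_multiset_sum]
  simp only [Function.comp_def, Multiset.card_replicate]

theorem compCount_eq_mEps_add_one [Nonempty V] (ε : ℝ) : compCount w ε = mEps w ε + 1 := by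
  rw [compCount_eq_sum_deathMult_add_one, mEps_eq_sum_deathMult]

end Deaths

lemma Multiset.filter_le_add_filter_lt {α : Type*} [LinearOrder α] (s : Multiset α) (a : α) :
    s.filter (· ≤ a) + s.filter (a < ·) = s := by
  conv_rhs => rw [← Multiset.filter_add_not (· ≤ a) s]
  simp only [not_le]

section Threshold

variable {w : V → V → ℝ} {ε : ℝ} (hw1 : ∀ i j, w i j ≤ 1)
include hw1

lemma le_one_of_mem_weightVals {m : ℝ} (hm : m ∈ weightVals w) : m ≤ 1 := by
  obtain ⟨⟨i, j⟩, -, rfl⟩ := Finset.mem_image.1 hm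
  exact max_le (hw1 i j) (hw1 j i)

omit [Fintype V] in
lemma max_thresh (i j : V) :
    max (thresh w ε i j) (thresh w ε j i) =
      if max (w i j) (w j i) ≤ ε then max (w i j) (w j i) else 1 := by
  unfold thresh
  by_cases hij : w i j ≤ ε <;> by_cases hji : w j i ≤ ε <;>
    simp [hij, hji, hw1]

lemma weightVals_thresh :
    weightVals (thresh w ε) = (weightVals w).image fun m => if m ≤ ε then m else 1 := by
  simp only [weightVals, Finset.image_image, Function.comp_def, max_thresh hw1]

omit [Fintype V] in
lemma vrGraph_thresh_of_le {α : ℝ} (hα : α ≤ ε) :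
    vrGraph (thresh w ε) α = vrGraph w α := by
  ext i j
  refine and_congr_right fun _ => ?_
  have hle := max_le (hw1 i j) (hw1 j i)
  rw [max_thresh hw1]
  split_ifs with h
  · rfl
  · constructor <;> intro <;> linarith [not_le.1 h]

omit [Fintype V] in
lemma compCount_thresh_of_le {α : ℝ} (hα : α ≤ ε) :
    compCount (thresh w ε) α = compCount w α := by
  rw [compCount, vrGraph_thresh_of_le hw1 hα, compCount]

omit [Fintype V] in
lemma deathMult_thresh_of_le {d : ℝ} (hd : d ≤ ε) :
    deathMult (thresh w ε) d = deathMult w d := by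
  have hleft : compCountLeft (thresh w ε) d = compCountLeft w d :=
    congrArg sInf <| Set.image_congr fun α hα =>
      compCount_thresh_of_le hw1 (le_of_lt (lt_of_lt_of_le hα hd))
  rw [deathMult, deathMult, hleft, compCount_thresh_of_le hw1 hd]

lemma finiteDeaths_thresh_filter_le :
    (finiteDeaths (thresh w ε)).filter (· ≤ ε) = (finiteDeaths w).filter (· ≤ ε) := by
  have hvals :
      (weightVals (thresh w ε)).filter (· ≤ ε) = (weightVals w).filter (· ≤ ε) := by
    ext m
    simp only [weightVals_thresh hw1, Finset.mem_filter, Finset.mem_image]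
    constructor
    · rintro ⟨⟨m', hm', rfl⟩, hle⟩
      split_ifs at hle ⊢ with h
      · exact ⟨hm', h⟩
      · linarith [not_le.1 h, le_one_of_mem_weightVals hw1 hm']
    · rintro ⟨hm, hle⟩
      exact ⟨⟨m, hm, if_pos hle⟩, hle⟩
  rw [finiteDeaths_filter, finiteDeaths_filter, hvals]
  exact Multiset.bind_congr fun d hd => by
    rw [deathMult_thresh_of_le hw1 (Finset.mem_filter.1 hd).2]

lemma eq_one_of_mem_finiteDeaths_thresh {d : ℝ} (hd : d ∈ finiteDeaths (thresh w ε))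
    (hεd : ε < d) : d = 1 := by
  have hval := mem_weightVals_of_mem_finiteDeaths hd
  rw [weightVals_thresh hw1] at hval
  obtain ⟨m, -, rfl⟩ := Finset.mem_image.1 hval
  split_ifs at hεd ⊢ with h
  exacts [absurd h hεd.not_ge, rfl]

/-- The component count at `ε` is unchanged by thresholding, so the number of deaths above `ε`
is too; all of them happen at `1`. -/
lemma finiteDeaths_thresh_filter_lt [Nonempty V] :
    (finiteDeaths (thresh w ε)).filter (ε < ·) = Multiset.replicate (mEps w ε) 1 := by
  refine Multiset.eq_replicate.2 ⟨?_, fun d hd => ?_⟩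
  · have h := compCount_eq_mEps_add_one (thresh w ε) ε
    rw [compCount_thresh_of_le hw1 le_rfl, compCount_eq_mEps_add_one] at h
    exact (Nat.add_right_cancel h).symm
  · obtain ⟨hd, hεd⟩ := Multiset.mem_filter.1 hd
    exact eq_one_of_mem_finiteDeaths_thresh hw1 hd hεd

lemma finiteDeaths_thresh [Nonempty V] :
    finiteDeaths (thresh w ε) =
      (finiteDeaths w).filter (· ≤ ε) + Multiset.replicate (mEps w ε) 1 := by
  rw [← finiteDeaths_thresh_filter_le hw1, ← finiteDeaths_thresh_filter_lt hw1,
    Multiset.filter_le_add_filter_lt]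

end Threshold

section Matching

lemma isMatching_map_fst_map_snd (M : Multiset ((ℝ × ℝ) × (ℝ × ℝ))) :
    IsMatching (M.map Prod.fst) (M.map Prod.snd) M :=
  ⟨0, 0, by simp, by simp, (add_zero _).symm, (add_zero _).symm⟩

lemma matchCost_nonneg (p : ℝ) (M : Multiset ((ℝ × ℝ) × (ℝ × ℝ))) :
    0 ≤ matchCost p M :=
  Multiset.sum_nonneg fun x hx => by
    obtain ⟨q, -, rfl⟩ := Multiset.mem_map.1 hx
    positivity

lemma diagramDist_le_matchCost {p : ℝ} {D₁ D₂ : Multiset (ℝ × ℝ)}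
    {M : Multiset ((ℝ × ℝ) × (ℝ × ℝ))} (hM : IsMatching D₁ D₂ M) :
    diagramDist p D₁ D₂ ≤ matchCost p M ^ (1 / p) :=
  csInf_le ⟨0, by rintro _ ⟨M', -, rfl⟩; exact Real.rpow_nonneg (matchCost_nonneg p M') _⟩
    ⟨M, hM, rfl⟩

lemma diagramDist_add_replicate_le {p : ℝ} (hp : 0 < p) {A B : Multiset ℝ} {t δ : ℝ}
    (hδ : 0 ≤ δ) (hB : ∀ b ∈ B, |b - t| ≤ δ) :
    diagramDist p ((A + B).map fun d => (0, d))
        ((A + Multiset.replicate (Multiset.card B) t).map fun d => (0, d)) ≤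
      (Multiset.card B : ℝ) ^ (1 / p) * δ := by
  set M := A.map (fun a => (((0 : ℝ), a), ((0 : ℝ), a))) +
    B.map (fun b => (((0 : ℝ), b), ((0 : ℝ), t)))
  have hM : IsMatching ((A + B).map fun d => (0, d))
      ((A + Multiset.replicate (Multiset.card B) t).map fun d => (0, d)) M := by
    convert isMatching_map_fst_map_snd M using 1 <;>
      simp [M, Multiset.map_map, Multiset.map_replicate, Multiset.map_const']
  have hcost : matchCost p M ≤ Multiset.card B * δ ^ p :=
    calc matchCost p M = (B.map fun b => |b - t| ^ p).sum := by
          simp [matchCost, M, Multiset.map_map, Real.zero_rpow hp.ne']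
      _ ≤ (B.map fun _ => δ ^ p).sum := Multiset.sum_map_le_sum_map _ _ fun b hb =>
          Real.rpow_le_rpow (abs_nonneg _) (hB b hb) hp.le
      _ = Multiset.card B * δ ^ p := by simp
  calc _ ≤ matchCost p M ^ (1 / p) := diagramDist_le_matchCost hM
    _ ≤ (Multiset.card B * δ ^ p) ^ (1 / p) :=
        Real.rpow_le_rpow (matchCost_nonneg p M) hcost (by positivity)
    _ = (Multiset.card B : ℝ) ^ (1 / p) * δ := by
        rw [Real.mul_rpow (by positivity) (by positivity), ← Real.rpow_mul hδ,
          mul_one_div_cancel hp.ne', Real.rpow_one]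

end Matching

theorem compCount_eq_mEps_add_one_and_bound_general
    {N : ℕ} (hN : 0 < N) (w : Fin N → Fin N → ℝ)
    (hw1 : ∀ i j, w i j ≤ 1)
    (ε : ℝ) (hε1 : ε ≤ 1) (p : ℝ) (hp : 1 ≤ p) :
    compCount w ε = mEps w ε + 1 ∧
    diagramDist p (D0 w) (D0 (thresh w ε)) ≤
      ((compCount w ε : ℝ) - 1) ^ (1 / p) * (1 - ε) := by
  have : Nonempty (Fin N) := Fin.pos_iff_nonempty.1 hN
  have hcount := compCount_eq_mEps_add_one w ε
  refine ⟨hcount, ?_⟩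
  have hdeaths : ∀ d ∈ (finiteDeaths w).filter (ε < ·), |d - 1| ≤ 1 - ε := fun d hd => by
    obtain ⟨hd, hεd⟩ := Multiset.mem_filter.1 hd
    have := le_one_of_mem_weightVals hw1 (mem_weightVals_of_mem_finiteDeaths hd)
    rw [abs_of_nonpos (by linarith)]
    linarith
  have hbound := diagramDist_add_replicate_le (by linarith)
    (A := (finiteDeaths w).filter (· ≤ ε)) (sub_nonneg.2 hε1) hdeaths
  rw [Multiset.filter_le_add_filter_lt, show Multiset.card _ = mEps w ε from rfl,
    ← finiteDeaths_thresh hw1] at hbound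
  rw [hcount, Nat.cast_add_one, add_sub_cancel_right]
  exact hbound

/-- The number of connected components of the Rips 1-skeleton at
scale `ε` satisfies `c(ε) = m(ε) + 1`, and consequently
`W_p(D₀(G), D₀(G_ε)) ≤ (c(ε) - 1)^{1/p} (1 - ε)`. -/
theorem compCount_eq_mEps_add_one_and_bound
    {N : ℕ} (hN : 0 < N) (w : Fin N → Fin N → ℝ)
    (hw0 : ∀ i j, 0 ≤ w i j) (hw1 : ∀ i j, w i j ≤ 1)
    (hsymm : ∀ i j, w i j = w j i)
    (ε : ℝ) (hε0 : 0 ≤ ε) (hε1 : ε ≤ 1) (p : ℝ) (hp : 1 ≤ p) :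
    compCount w ε = mEps w ε + 1 ∧
    diagramDist p (D0 w) (D0 (thresh w ε)) ≤
      ((compCount w ε : ℝ) - 1) ^ (1 / p) * (1 - ε) :=
  compCount_eq_mEps_add_one_and_bound_general hN w hw1 ε hε1 p hp

end
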